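/- arXiv:0808.4119 — 7 statements merged into one kernel-verified Lean document; each statement's English description precedes it below -/
import Mathlib

section
/- Suppose a map f : X → Y between uniform spaces has chain lifting, and F is an entourage of X such that any two F-chains in X that start at the same point and have identical images under f are F-close. Then the quotient map q_F : X → X_f/F generates a uniform structure on X_f/F; that is, the family {(q_F × q_F)(D) : D an entourage of X} is a basis for a uniform structure on X_f/F. -/
open Filter Set

universe u v

section Chains

variable {X : Type u} {Y : Type v}

/-- `c` is an `E`-chain: consecutive members of the list lie in `E`. -/
def IsEChain (E : Set (X × X)) (c : List X) : Prop :=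
  c.Chain' (fun a b => (a, b) ∈ E)

/-- Two chains (necessarily of the same length) are `E`-close. -/
def EClose (E : Set (X × X)) (c d : List X) : Prop :=
  List.Forall₂ (fun a b => (a, b) ∈ E) c d

variable [UniformSpace X] [UniformSpace Y]

/-- `f` generates the uniform structure on `Y`: it is uniformly continuous,
surjective, and images of entourages are entourages. -/
def GeneratesUS (f : X → Y) : Prop :=
  UniformContinuous f ∧ Function.Surjective f ∧
    ∀ E ∈ uniformity X, Prod.map f f '' E ∈ uniformity Y

/-- `f` has chain lifting. -/
def ChainLifting (f : X → Y) : Prop :=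
  ∀ E ∈ uniformity X, ∃ F ∈ uniformity X, ∀ x : X, ∀ c : List Y,
    IsEChain (Prod.map f f '' F) c → c.head? = some (f x) →
      ∃ d : List X, IsEChain E d ∧ d.head? = some x ∧ d.map f = c

/-- `f` has uniqueness of chain lifts. -/
def UniqueChainLifts (f : X → Y) : Prop :=
  ∀ E ∈ uniformity X, ∃ F ∈ uniformity X, F ⊆ E ∧ ∀ c d : List X,
    IsEChain F c → IsEChain F d → c.head? = d.head? → c.map f = d.map f → c = d

/-- `f` has approximate uniqueness of chain lifts. -/
def ApproxUniqueChainLifts (f : X → Y) : Prop :=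
  ∀ E ∈ uniformity X, ∃ F ∈ uniformity X, F ⊆ E ∧ ∀ c d : List X,
    IsEChain F c → IsEChain F d → c.head? = d.head? → c.map f = d.map f → EClose E c d

/-- `f` has strong approximate uniqueness of chain lifts. -/
def StrongApproxUniqueChainLifts (f : X → Y) : Prop :=
  ∀ E ∈ uniformity X, ∃ F ∈ uniformity X, F ⊆ E ∧ ∀ c d : List X,
    IsEChain F c → IsEChain F d → c.head? = d.head? → c.map f = d.map f → EClose F c d

/-- `f` is a uniform covering map. -/
def IsUCM (f : X → Y) : Prop :=
  GeneratesUS f ∧ ChainLifting f ∧ UniqueChainLifts f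

/-- `h` has `F`-bounded fibers. -/
def BoundedFibers {Z : Type*} (F : Set (X × X)) (h : X → Z) : Prop :=
  ∀ a b : X, h a = h b → (a, b) ∈ F

/-- `f` has complete fibers (each fiber, with the subspace uniformity, is complete). -/
def CompleteFibers (f : X → Y) : Prop :=
  ∀ y : Y, IsComplete (f ⁻¹' {y})

/-- `f` is approximated by uniform covering maps. -/
def ApproxByUCMs (f : X → Y) : Prop :=
  ∀ E ∈ uniformity X, ∃ F ∈ uniformity X, F ⊆ E ∧
    ∃ (Z : Type (max u v)) (_ : UniformSpace Z) (h : X → Z) (g : Z → Y),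
      (∀ x, g (h x) = f x) ∧ IsUCM g ∧ BoundedFibers F h

end Chains

section XfEQuot

variable {X : Type u} {Y : Type v}

/-- `y` can be joined to `x` by an `E`-chain inside the fiber `f⁻¹(f x)`. -/
def fiberRel (f : X → Y) (E : Set (X × X)) (x y : X) : Prop :=
  ∃ c : List X, IsEChain E c ∧ c.head? = some x ∧ c.getLast? = some y ∧
    ∀ z ∈ c, f z = f x

theorem fiberRel_mono (f : X → Y) {F E : Set (X × X)} (h : F ⊆ E) {a b : X}
    (hab : fiberRel f F a b) : fiberRel f E a b := by
  obtain ⟨c, hc, h1, h2, h3⟩ := hab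
  exact ⟨c, hc.imp (fun _ _ hx => h hx), h1, h2, h3⟩

/-- `X_f/E`: the quotient of `X` obtained by identifying each `E`-component of
each fiber of `f` to a point. -/
def XfE (f : X → Y) (E : Set (X × X)) : Type u :=
  Quot (fiberRel f E)

/-- The quotient map `q_E : X → X_f/E`. -/
def qE (f : X → Y) (E : Set (X × X)) : X → XfE f E :=
  Quot.mk (fiberRel f E)

/-- The induced map `φ_{FE} : X_f/F → X_f/E` for `F ⊆ E`, sending `q_F x` to `q_E x`. -/
def phiFE (f : X → Y) {F E : Set (X × X)} (h : F ⊆ E) : XfE f F → XfE f E :=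
  Quot.lift (qE f E) (fun _ _ hab => Quot.sound (fiberRel_mono f h hab))

end XfEQuot

/-!
Under the hypothesis on `F`, comparing an `F`-chain inside a fiber with the constant chain at
its first point shows that `q_F x = q_F y` exactly when `f x = f y` and `(x, y) ∈ F`. Chain
lifting then transports a small step `(x, y)` to a small step starting at any other point `x'`
of the class of `x`, ending in the class of `y`; this gives, for every entourage `D`, an
entourage `D'` with `q_F(D') ∘ q_F(D') ⊆ q_F(D)`, which is the only uniformity axiom that is
not automatic for the images of entourages.
-/

open scoped Uniformity SetRel

theorem exists_uniformSpace_hasBasis_image {α β : Type*} [UniformSpace α] {q : α → β}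
    (hq : Function.Surjective q)
    (hcomp : ∀ D ∈ 𝓤 α, ∃ D' ∈ 𝓤 α,
      (Prod.map q q '' D') ○ (Prod.map q q '' D') ⊆ Prod.map q q '' D) :
    ∃ u : UniformSpace β, (@uniformity β u).HasBasis (· ∈ 𝓤 α) (Prod.map q q '' ·) := by
  have hB := (𝓤 α).basis_sets.map (Prod.map q q)
  refine ⟨.ofCore (.mk' (map (Prod.map q q) (𝓤 α)) ?refl ?symm ?comp), hB⟩
  case refl =>
    intro r hr z
    obtain ⟨x, rfl⟩ := hq z
    exact refl_mem_uniformity (x := x) (Filter.mem_map.1 hr)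
  case symm =>
    intro r hr
    exact Filter.mem_map.2 (tendsto_swap_uniformity (Filter.mem_map.1 hr))
  case comp =>
    intro r hr
    obtain ⟨D, hD, hDr⟩ := hB.mem_iff.1 hr
    obtain ⟨D', hD', hD'D⟩ := hcomp D hD
    exact ⟨_, image_mem_map hD', hD'D.trans hDr⟩

section FiberStep

variable {X : Type u} {Y : Type v} {f : X → Y} {F : Set (X × X)}

@[simp]
theorem isEChain_cons_cons {a b : X} {l : List X} :
    IsEChain F (a :: b :: l) ↔ (a, b) ∈ F ∧ IsEChain F (b :: l) :=
  List.isChain_cons_cons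

@[simp]
theorem isEChain_singleton (a : X) : IsEChain F [a] :=
  List.isChain_singleton a

def ChainsWithSameImageClose (f : X → Y) (F : Set (X × X)) : Prop :=
  ∀ c d : List X, IsEChain F c → IsEChain F d → c.head? = d.head? → c.map f = d.map f →
    EClose F c d

def fiberStep (f : X → Y) (F : Set (X × X)) (x y : X) : Prop :=
  f x = f y ∧ (x, y) ∈ F

theorem fiberRel_of_fiberStep {x y : X} (h : fiberStep f F x y) : fiberRel f F x y := by
  obtain ⟨hf, hxy⟩ := h
  refine ⟨[x, y], by simpa using hxy, rfl, rfl, ?_⟩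
  simp [hf]

namespace ChainsWithSameImageClose

variable (h : ChainsWithSameImageClose f F) (hrefl : ∀ x, (x, x) ∈ F)
include h hrefl

theorem mem_of_mem_fiber_chain {c : List X} {x : X} (hc : IsEChain F c)
    (hx : c.head? = some x) (hfib : ∀ z ∈ c, f z = f x) : ∀ z ∈ c, (z, x) ∈ F := by
  have hclose := h c (c.map fun _ => x) hc
    ((List.isChain_map _).2 (hc.imp fun _ _ _ => hrefl x)) (by rw [List.head?_map, hx]; rfl)
    (by rw [List.map_map]; exact List.map_congr_left hfib)
  rwa [EClose, List.forall₂_map_right_iff, List.forall₂_same] at hclose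

theorem fiberStep_symm {x y : X} (hxy : fiberStep f F x y) : fiberStep f F y x := by
  obtain ⟨hf, hF⟩ := hxy
  refine ⟨hf.symm, h.mem_of_mem_fiber_chain hrefl (c := [x, y]) ?_ rfl ?_ y (by simp)⟩
  · simpa using hF
  · simp [hf]

theorem fiberStep_trans {x y z : X} (hxy : fiberStep f F x y) (hyz : fiberStep f F y z) :
    fiberStep f F x z := by
  obtain ⟨hf₁, hF₁⟩ := hxy
  obtain ⟨hf₂, hF₂⟩ := hyz
  refine h.fiberStep_symm hrefl
    ⟨(hf₁.trans hf₂).symm, h.mem_of_mem_fiber_chain hrefl (c := [x, y, z]) ?_ rfl ?_ z (by simp)⟩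
  · simp [hF₁, hF₂]
  · simp [hf₁, hf₂]

theorem equivalence_fiberStep : Equivalence (fiberStep f F) :=
  ⟨fun x => ⟨rfl, hrefl x⟩, h.fiberStep_symm hrefl, h.fiberStep_trans hrefl⟩

theorem fiberStep_of_fiberRel {x y : X} (hxy : fiberRel f F x y) : fiberStep f F x y := by
  obtain ⟨c, hc, hx, hy, hfib⟩ := hxy
  have hyc : y ∈ c := List.mem_of_getLast? hy
  exact h.fiberStep_symm hrefl ⟨hfib y hyc, h.mem_of_mem_fiber_chain hrefl hc hx hfib y hyc⟩

theorem qE_eq_iff {x y : X} : qE f F x = qE f F y ↔ fiberStep f F x y := by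
  refine ⟨fun hq => ?_, fun hxy => Quot.sound (fiberRel_of_fiberStep hxy)⟩
  exact (h.equivalence_fiberStep hrefl).eqvGen_iff.1
    (Relation.EqvGen.mono (fun _ _ => h.fiberStep_of_fiberRel hrefl) _ _ (Quot.eqvGen_exact hq))

end ChainsWithSameImageClose

end FiberStep

section ChainLifting

variable {X : Type u} {Y : Type v} [UniformSpace X] {f : X → Y}
  {F : Set (X × X)}

theorem ChainLifting.exists_fiberStep (hcl : ChainLifting f) (h : ChainsWithSameImageClose f F)
    (hF : F ∈ 𝓤 X) {E : Set (X × X)} (hE : E ∈ 𝓤 X) :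
    ∃ G ∈ 𝓤 X, ∀ x x' y : X, fiberStep f F x x' → (x, y) ∈ G →
      ∃ y', fiberStep f F y y' ∧ (x', y') ∈ E := by
  obtain ⟨G, hG, hlift⟩ := hcl (E ∩ F) (inter_mem hE hF)
  refine ⟨G ∩ F, inter_mem hG hF, ?_⟩
  rintro x x' y ⟨hfx, hxx'⟩ ⟨hxyG, hxyF⟩
  obtain ⟨d, hd, hdx', hdf⟩ := hlift x' [f x, f y]
    (by simpa using ⟨x, y, hxyG, rfl, rfl⟩) (by simp [hfx])
  obtain ⟨y', rfl, hfy'⟩ : ∃ y', d = [x', y'] ∧ f y' = f y := by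
    rcases d with _ | ⟨a, _ | ⟨b, _ | ⟨_, _⟩⟩⟩ <;> simp_all
  have hx'y' : (x', y') ∈ E ∩ F := by simpa using hd
  -- the lift `x, x', y'` and the chain `x, x, y` have the same image
  have hclose := h [x, x, y] [x, x', y'] (by simp [refl_mem_uniformity hF, hxyF])
    (by simp [hxx', hx'y'.2]) rfl (by simp [hfx, hfy'])
  refine ⟨y', ⟨hfy'.symm, ?_⟩, hx'y'.1⟩
  simp only [EClose, List.forall₂_cons] at hclose
  exact hclose.2.2.1

theorem exists_qE_image_comp_subset (hcl : ChainLifting f) (h : ChainsWithSameImageClose f F)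
    (hF : F ∈ 𝓤 X) {D : Set (X × X)} (hD : D ∈ 𝓤 X) :
    ∃ D' ∈ 𝓤 X, (Prod.map (qE f F) (qE f F) '' D') ○ (Prod.map (qE f F) (qE f F) '' D') ⊆
      Prod.map (qE f F) (qE f F) '' D := by
  have hrefl : ∀ x, (x, x) ∈ F := fun _ => refl_mem_uniformity hF
  obtain ⟨E, hE, hED⟩ := comp_mem_uniformity_sets hD
  obtain ⟨G, hG, htransport⟩ := hcl.exists_fiberStep h hF hE
  refine ⟨G ∩ E, inter_mem hG hE, ?_⟩
  rintro ⟨p, r⟩ ⟨m, ⟨⟨x₁, y₁⟩, h₁, hpm⟩, ⟨x₂, y₂⟩, h₂, hmr⟩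
  simp only [Prod.map_apply, Prod.mk.injEq] at hpm hmr
  obtain ⟨rfl, rfl⟩ := hpm
  obtain ⟨hq, rfl⟩ := hmr
  obtain ⟨y', hy₂y', hy₁y'⟩ :=
    htransport x₂ y₁ y₂ ((h.qE_eq_iff hrefl).1 hq) h₂.1
  refine ⟨(x₁, y'), hED ⟨y₁, h₁.2, hy₁y'⟩, ?_⟩
  simp only [Prod.map_apply, Prod.mk.injEq, true_and]
  exact ((h.qE_eq_iff hrefl).2 (h.fiberStep_symm hrefl hy₂y'))

end ChainLifting

theorem qE_generates_uniformity_general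
    {X : Type u} {Y : Type v} [UniformSpace X] (f : X → Y)
    (hcl : ChainLifting f) (F : Set (X × X)) (hF : F ∈ uniformity X)
    (hchains : ∀ c d : List X, IsEChain F c → IsEChain F d →
      c.head? = d.head? → c.map f = d.map f → EClose F c d) :
    ∃ u : UniformSpace (XfE f F),
      (@uniformity (XfE f F) u).HasBasis (fun D : Set (X × X) => D ∈ uniformity X)
        (fun D => Prod.map (qE f F) (qE f F) '' D) :=
  exists_uniformSpace_hasBasis_image Quot.mk_surjective
    fun _ hD => exists_qE_image_comp_subset hcl hchains hF hD

/-- If `f` has chain lifting and `F` is an entourage of `X` such that any two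
`F`-chains starting at the same point with identical images under `f` are
`F`-close, then `q_F` generates a uniform structure on `X_f/F`: the images of
entourages of `X` under `q_F × q_F` form a basis of a uniformity on `X_f/F`. -/
theorem qE_generates_uniformity
    {X : Type u} {Y : Type v} [UniformSpace X] [UniformSpace Y] (f : X → Y)
    (hcl : ChainLifting f) (F : Set (X × X)) (hF : F ∈ uniformity X)
    (hchains : ∀ c d : List X, IsEChain F c → IsEChain F d →
      c.head? = d.head? → c.map f = d.map f → EClose F c d) :
    ∃ u : UniformSpace (XfE f F),
      (@uniformity (XfE f F) u).HasBasis (fun D : Set (X × X) => D ∈ uniformity X)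
        (fun D => Prod.map (qE f F) (qE f F) '' D) :=
  qE_generates_uniformity_general f hcl F hF hchains
end

section
/- Suppose a map f : X → Y between uniform spaces generates the uniform structure on Y, has chain lifting, and has strong approximate uniqueness of chain lifts. Then f is approximated by uniform covering maps. -/
open Filter Set

universe u v

/-!
Fix `E` and let `F ⊆ E` be an entourage such that `F`-chains with the same start and the
same image under `f` are `F`-close. Applied to chains of length three, this makes "same image
under `f` and `F`-close" an equivalence relation; `Z` is the quotient, with the image of the
uniformity of `X`. Chain lifting for `f` lets an entourage step be slid along a fiber of
`X → Z`. This is what makes that image a uniformity, and it lifts chains of `Z` to `F`-chains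
of `X`. Two such lifts of a chain of `Y` are `F`-close with equal images under `f`, so they
have equal images in `Z`, which is uniqueness of chain lifts for `Z → Y`.
-/

namespace List

theorem Forall₂.map_eq_of_map_eq {α β γ : Type*} {R : α → α → Prop} {f : α → γ} {h : α → β}
    (hR : ∀ a b, R a b → f a = f b → h a = h b) {c d : List α} (hcd : Forall₂ R c d)
    (hf : c.map f = d.map f) : c.map h = d.map h := by
  induction hcd with
  | nil => rfl
  | cons hab _ ih =>
    simp only [map_cons, cons.injEq] at hf ⊢
    exact ⟨hR _ _ hab hf.1, ih hf.2⟩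

end List

section ChainLifts

variable {X : Type*} {Y : Type*} {Z : Type*}

theorem isEChain_pair {E : Set (X × X)} {x y : X} (hxy : (x, y) ∈ E) : IsEChain E [x, y] :=
  List.IsChain.cons_cons hxy (List.isChain_singleton y)

theorem isEChain_triple {E : Set (X × X)} {x y z : X} (hxy : (x, y) ∈ E) (hyz : (y, z) ∈ E) :
    IsEChain E [x, y, z] :=
  List.IsChain.cons_cons hxy (isEChain_pair hyz)

def ChainLiftsAreClose (f : X → Y) (F : Set (X × X)) : Prop :=
  ∀ c d : List X, IsEChain F c → IsEChain F d → c.head? = d.head? → c.map f = d.map f →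
    EClose F c d

theorem ChainLiftsAreClose.mem_of_two_steps {f : X → Y} {F : Set (X × X)}
    (hF : ChainLiftsAreClose f F) {x y z y' z' : X} (hxy : (x, y) ∈ F) (hyz : (y, z) ∈ F)
    (hxy' : (x, y') ∈ F) (hyz' : (y', z') ∈ F) (hy : f y = f y') (hz : f z = f z') :
    (z, z') ∈ F := by
  have := hF _ _ (isEChain_triple hxy hyz) (isEChain_triple hxy' hyz') rfl (by simp [hy, hz])
  simp_all [EClose]

def StepsSlideAlongFibers (h : X → Z) (U W : Set (X × X)) : Prop :=
  ∀ ⦃x x' y⦄, h x = h x' → (x', y) ∈ U → ∃ y', (x, y') ∈ W ∧ h y' = h y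

theorem StepsSlideAlongFibers.exists_chain_lift {h : X → Z} {U W : Set (X × X)}
    (hUW : StepsSlideAlongFibers h U W) :
    ∀ (p : List Z) (x : X), IsEChain (Prod.map h h '' U) p → p.head? = some (h x) →
      ∃ c : List X, IsEChain W c ∧ c.head? = some x ∧ c.map h = p
  | [], _, _, hx => by simp at hx
  | [_], x, _, hx => ⟨[x], List.isChain_singleton x, rfl, by simpa using hx.symm⟩
  | z :: z' :: p, x, hp, hx => by
    obtain ⟨⟨⟨a, b⟩, hab, hza⟩, hp'⟩ := List.isChain_cons_cons.mp hp
    simp only [Prod.map, Prod.mk.injEq] at hza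
    simp only [List.head?_cons, Option.some.injEq] at hx
    obtain ⟨y, hxy, hyb⟩ := hUW (hx.symm.trans hza.1.symm) hab
    obtain ⟨c, hc, hcx, hcp⟩ :=
      hUW.exists_chain_lift (z' :: p) y hp' (by simp [hyb, hza.2])
    obtain ⟨c', rfl⟩ : ∃ c', c = y :: c' := by
      cases c <;> simp_all
    refine ⟨x :: y :: c', List.IsChain.cons_cons hxy hc, rfl, ?_⟩
    simp [hx, hcp]

end ChainLifts

section Pushforward

variable {X : Type*} {Y : Type*} {Z : Type*} [UniformSpace X]

abbrev UniformSpace.pushforward (h : X → Z) (hh : Function.Surjective h)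
    (hslide : ∀ W ∈ uniformity X, ∃ U ∈ uniformity X, StepsSlideAlongFibers h U W) :
    UniformSpace Z :=
  .ofCore <| .mk' (map (Prod.map h h) (uniformity X))
    (fun r hr z => by
      obtain ⟨x, rfl⟩ := hh z
      exact (refl_mem_uniformity (mem_map.mp hr) : (x, x) ∈ Prod.map h h ⁻¹' r))
    (fun _ hr => symm_le_uniformity hr)
    (fun r hr => by
      obtain ⟨V, hV, hVr⟩ := comp_mem_uniformity_sets (mem_map.mp hr)
      obtain ⟨U, hU, hUV⟩ := hslide V hV
      -- the second step, which starts in the fiber of `b`, slides to a `V`-step from `b`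
      refine ⟨Prod.map h h '' (V ∩ U), image_mem_map (inter_mem hV hU), ?_⟩
      rintro ⟨z₁, z₃⟩ ⟨z₂, ⟨⟨a, b⟩, ⟨hab, -⟩, hab'⟩, ⟨⟨b', c⟩, ⟨-, hbc⟩, hbc'⟩⟩
      simp only [Prod.map, Prod.mk.injEq] at hab' hbc'
      obtain ⟨rfl, rfl⟩ := hab'
      obtain ⟨hb, rfl⟩ := hbc'
      obtain ⟨c', hbc', hc'⟩ := hUV hb.symm hbc
      rw [← hc']
      exact hVr (show (a, c') ∈ SetRel.comp V V from ⟨b, hab, hbc'⟩))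

variable [UniformSpace Z] {h : X → Z} {g : Z → Y}

theorem GeneratesUS.of_comp [UniformSpace Y]
    (hZ : uniformity Z = map (Prod.map h h) (uniformity X)) (hgh : GeneratesUS (g ∘ h)) :
    GeneratesUS g := by
  refine ⟨?_, hgh.2.1.of_comp, fun S hS => ?_⟩
  · change Tendsto (Prod.map g g) _ _
    rw [hZ, tendsto_map'_iff]
    exact hgh.1
  · rw [hZ, mem_map] at hS
    refine mem_of_superset (hgh.2.2 _ hS) ?_
    rw [← Prod.map_comp_map, image_comp]
    exact image_mono (image_preimage_subset _ _)

theorem ChainLifting.of_comp (hZ : uniformity Z = map (Prod.map h h) (uniformity X))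
    (hh : Function.Surjective h) (hgh : ChainLifting (g ∘ h)) : ChainLifting g := by
  intro S hS
  rw [hZ, mem_map] at hS
  obtain ⟨F, hF, hlift⟩ := hgh _ hS
  refine ⟨Prod.map h h '' F, hZ ▸ image_mem_map hF, ?_⟩
  rintro z c hc hcz
  obtain ⟨x, rfl⟩ := hh z
  rw [image_image] at hc
  obtain ⟨d, hd, hdx, rfl⟩ := hlift x c hc hcz
  exact ⟨d.map h, List.isChain_map_of_isChain h (fun _ _ hab => hab) hd, by simp [hdx], by simp⟩

theorem UniqueChainLifts.of_comp (hZ : uniformity Z = map (Prod.map h h) (uniformity X))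
    (hh : Function.Surjective h) {F : Set (X × X)} (hF : ChainLiftsAreClose (g ∘ h) F)
    (hslide : ∃ U ∈ uniformity X, StepsSlideAlongFibers h U F)
    (hker : ∀ a b, (a, b) ∈ F → g (h a) = g (h b) → h a = h b) : UniqueChainLifts g := by
  obtain ⟨U, hU, hUF⟩ := hslide
  intro S hS
  rw [hZ, mem_map] at hS
  refine ⟨Prod.map h h '' (Prod.map h h ⁻¹' S ∩ U), hZ ▸ image_mem_map (inter_mem hS hU),
    (image_mono inter_subset_left).trans (image_preimage_subset _ _), ?_⟩
  have hlift : ∀ (p : List Z) (x : X), IsEChain (Prod.map h h '' (Prod.map h h ⁻¹' S ∩ U)) p →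
      p.head? = some (h x) → ∃ c : List X, IsEChain F c ∧ c.head? = some x ∧ c.map h = p :=
    fun p x hp =>
      hUF.exists_chain_lift p x (hp.imp fun _ _ hp => image_mono inter_subset_right hp)
  rintro (_ | ⟨z, c⟩) (_ | ⟨z', d⟩) hc hd hcd hgcd
  · rfl
  · simp at hgcd
  · simp at hgcd
  obtain rfl : z = z' := by simpa using hcd
  obtain ⟨x, rfl⟩ := hh z
  obtain ⟨c', hc', hcx, hcc'⟩ := hlift _ x hc rfl
  obtain ⟨d', hd', hdx, hdd'⟩ := hlift _ x hd rfl
  have hf : c'.map (g ∘ h) = d'.map (g ∘ h) := by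
    rw [← List.map_map, ← List.map_map, hcc', hdd']
    exact hgcd
  rw [← hcc', ← hdd']
  exact (hF c' d' hc' hd' (hcx.trans hdx.symm) hf).map_eq_of_map_eq hker hf

end Pushforward

section FiberQuotient

variable {X Y Z : Type*} {f : X → Y} {F : Set (X × X)}

theorem ChainLiftsAreClose.equivalence_fiberRel (hF : ChainLiftsAreClose f F)
    (hrefl : ∀ x, (x, x) ∈ F) : Equivalence fun x y => f x = f y ∧ (x, y) ∈ F := by
  have symm : ∀ {x y}, f x = f y ∧ (x, y) ∈ F → f y = f x ∧ (y, x) ∈ F :=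
    fun ⟨hf, hxy⟩ =>
      ⟨hf.symm, hF.mem_of_two_steps hxy (hrefl _) (hrefl _) (hrefl _) hf.symm hf.symm⟩
  refine ⟨fun x => ⟨rfl, hrefl x⟩, symm, fun ⟨hf, hxy⟩ ⟨hf', hyz⟩ => symm ?_⟩
  exact ⟨(hf.trans hf').symm,
    hF.mem_of_two_steps hxy hyz (hrefl _) (hrefl _) hf.symm (hf.trans hf').symm⟩

theorem ChainLiftsAreClose.stepsSlideAlongFibers [UniformSpace X]
    (hF : ChainLiftsAreClose f F) (hFu : F ∈ uniformity X) (hcl : ChainLifting f) {h : X → Z}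
    (hker : ∀ a b, h a = h b ↔ f a = f b ∧ (a, b) ∈ F) :
    ∀ W ∈ uniformity X, ∃ U ∈ uniformity X, StepsSlideAlongFibers h U W := by
  intro W hW
  obtain ⟨V, hV, hlift⟩ := hcl (W ∩ F) (inter_mem hW hFu)
  refine ⟨V ∩ F, inter_mem hV hFu, fun x x' y hxx' hx'y => ?_⟩
  obtain ⟨hfx, hxx'⟩ := (hker x x').1 hxx'
  obtain ⟨d, hd, hdx, hdf⟩ :=
    hlift x [f x', f y] (isEChain_pair ⟨_, hx'y.1, rfl⟩) (by simp [hfx])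
  obtain ⟨b, rfl, hfb⟩ : ∃ b, d = [x, b] ∧ f b = f y := by
    rcases d with _ | ⟨a, _ | ⟨b, _ | _⟩⟩ <;> simp_all
  have hxb : (x, b) ∈ W ∩ F := (List.isChain_cons_cons.mp hd).1
  refine ⟨b, hxb.1, (hker b y).2 ⟨hfb, ?_⟩⟩
  exact hF.mem_of_two_steps (refl_mem_uniformity hFu) hxb.2 hxx' hx'y.2 hfx hfb

end FiberQuotient

/-- If a map between uniform spaces generates the uniform structure on the codomain,
has chain lifting, and has strong approximate uniqueness of chain lifts, then it is
approximated by uniform covering maps. -/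
theorem approxByUCMs_of_strongApproxUnique
    {X : Type u} {Y : Type v} [UniformSpace X] [UniformSpace Y] (f : X → Y)
    (hgen : GeneratesUS f) (hcl : ChainLifting f)
    (hsau : StrongApproxUniqueChainLifts f) : ApproxByUCMs f := by
  intro E hE
  obtain ⟨F, hF, hFE, hclose⟩ : ∃ F ∈ uniformity X, F ⊆ E ∧ ChainLiftsAreClose f F :=
    hsau E hE
  let s : Setoid X := ⟨_, hclose.equivalence_fiberRel fun _ => refl_mem_uniformity hF⟩
  let h : X → ULift.{v} (Quotient s) := fun x => ULift.up (Quotient.mk s x)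
  let g : ULift.{v} (Quotient s) → Y := fun z => Quotient.lift f (fun _ _ => And.left) z.down
  have hker : ∀ a b, h a = h b ↔ f a = f b ∧ (a, b) ∈ F :=
    fun _ _ => ULift.up_inj.trans Quotient.eq
  have hh : Function.Surjective h := ULift.up_surjective.comp Quotient.mk_surjective
  have hslide := hclose.stepsSlideAlongFibers hF hcl hker
  let _ := UniformSpace.pushforward h hh hslide
  refine ⟨F, hF, hFE, _, _, h, g, fun _ => rfl, ⟨GeneratesUS.of_comp (g := g) rfl hgen,
    ChainLifting.of_comp (g := g) rfl hh hcl, ?_⟩, fun a b hab => ((hker a b).1 hab).2⟩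
  exact UniqueChainLifts.of_comp rfl hh hclose (hslide F hF)
    fun a b hab hg => (hker a b).2 ⟨hg, hab⟩
end

section
/- Suppose {X_α, φ_{βα}} and {Y_α, ψ_{βα}} are inverse systems of uniform spaces over the same directed index set and f_α : X_α → Y_α are compatible maps, each having approximate uniqueness of chain lifts. Then the induced map f = lim f_α : lim X_α → lim Y_α has approximate uniqueness of chain lifts. -/
/-!
Since the index set is directed, the entourages `π_i⁻¹ E_i` pulled back from a single
coordinate form a basis of the inverse limit uniformity, and it suffices to treat those.
For `E = π_i⁻¹ E_i`, take `F = π_i⁻¹ F_i` with `F_i` given by the approximate uniqueness of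
chain lifts of `f_i`: `π_i` turns `F`-chains into `F_i`-chains, and `f_i ∘ π_i = π_i ∘ f`
turns equal `f`-images into equal `f_i`-images.
-/

open Filter Set

universe u v

/-- An inverse system of uniform spaces over a preordered index set, with
uniformly continuous bonding maps `bond i j h : Xs j → Xs i` for `i ≤ j`. -/
structure InvSys (ι : Type*) [Preorder ι] (Xs : ι → Type*)
    [∀ i, UniformSpace (Xs i)] where
  bond : ∀ i j, i ≤ j → Xs j → Xs i
  uc : ∀ i j (h : i ≤ j), UniformContinuous (bond i j h)
  bond_self : ∀ i (x : Xs i), bond i i le_rfl x = x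
  bond_comp : ∀ i j k (hij : i ≤ j) (hjk : j ≤ k) (x : Xs k),
    bond i j hij (bond j k hjk x) = bond i k (hij.trans hjk) x

/-- The inverse limit (the set of threads), carrying the inverse limit uniformity:
the subspace uniformity of the product uniformity, whose basic entourages are
preimages of entourages under the projections (since the index set is directed). -/
abbrev InvLim {ι : Type*} [Preorder ι] {Xs : ι → Type*} [∀ i, UniformSpace (Xs i)]
    (S : InvSys ι Xs) : Type _ :=
  { x : ∀ i, Xs i // ∀ i j (h : i ≤ j), S.bond i j h (x j) = x i }

/-- The strong Mittag-Leffler property of an inverse system. -/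
def StrongML {ι : Type*} [Preorder ι] {Xs : ι → Type*} [∀ i, UniformSpace (Xs i)]
    (S : InvSys ι Xs) : Prop :=
  ∀ i : ι, ∃ j : ι, ∃ h : i ≤ j,
    Set.range (S.bond i j h) = Set.range (fun x : InvLim S => x.1 i)

def ChainLiftsClose {X Y : Type*} (f : X → Y) (F E : Set (X × X)) : Prop :=
  ∀ c d : List X, IsEChain F c → IsEChain F d → c.head? = d.head? → c.map f = d.map f →
    EClose E c d

section Chains

variable {X X' : Type*} {Y Y' : Type*}

lemma isEChain_preimage_iff {p : X → X'} {F : Set (X' × X')} {c : List X} :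
    IsEChain (Prod.map p p ⁻¹' F) c ↔ IsEChain F (c.map p) :=
  (List.isChain_map (R := fun a b => (a, b) ∈ F) p).symm

lemma eClose_preimage_iff {p : X → X'} {E : Set (X' × X')} {c d : List X} :
    EClose (Prod.map p p ⁻¹' E) c d ↔ EClose E (c.map p) (d.map p) := by
  simp only [EClose, List.forall₂_map_left_iff, List.forall₂_map_right_iff, Set.mem_preimage,
    Prod.map]

lemma ChainLiftsClose.mono_right {f : X → Y} {F E E₁ : Set (X × X)}
    (h : ChainLiftsClose f F E) (hE : E ⊆ E₁) : ChainLiftsClose f F E₁ :=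
  fun c d hc hd hhead hmap => (h c d hc hd hhead hmap).imp fun _ _ hab => hE hab

lemma ChainLiftsClose.preimage {f : X → Y} {f' : X' → Y'} {p : X → X'} {q : Y → Y'}
    (hpq : ∀ x, f' (p x) = q (f x)) {F E : Set (X' × X')} (h : ChainLiftsClose f' F E) :
    ChainLiftsClose f (Prod.map p p ⁻¹' F) (Prod.map p p ⁻¹' E) := by
  intro c d hc hd hhead hmap
  have hmap' : ∀ l : List X, (l.map p).map f' = (l.map f).map q := fun l => by
    simp only [List.map_map, Function.comp_def, hpq]
  rw [eClose_preimage_iff]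
  exact h _ _ (isEChain_preimage_iff.1 hc) (isEChain_preimage_iff.1 hd)
    (by simp only [List.head?_map, hhead]) (by rw [hmap', hmap', hmap])

variable [UniformSpace X] [UniformSpace X']

lemma ApproxUniqueChainLifts.of_hasBasis {f : X → Y} {κ : Sort*} {P : κ → Prop}
    {s : κ → Set (X × X)} (hbasis : (uniformity X).HasBasis P s)
    (H : ∀ k, P k → ∃ F ∈ uniformity X, F ⊆ s k ∧ ChainLiftsClose f F (s k)) :
    ApproxUniqueChainLifts f := by
  intro E hE
  obtain ⟨k, hk, hsE⟩ := hbasis.mem_iff.1 hE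
  obtain ⟨F, hF, hFs, hclose⟩ := H k hk
  exact ⟨F, hF, hFs.trans hsE, hclose.mono_right hsE⟩

lemma ApproxUniqueChainLifts.exists_chainLiftsClose_preimage {f : X → Y} {f' : X' → Y'}
    {p : X → X'} {q : Y → Y'} (hf' : ApproxUniqueChainLifts f') (hp : UniformContinuous p)
    (hpq : ∀ x, f' (p x) = q (f x)) {E : Set (X' × X')} (hE : E ∈ uniformity X') :
    ∃ F ∈ uniformity X, F ⊆ Prod.map p p ⁻¹' E ∧ ChainLiftsClose f F (Prod.map p p ⁻¹' E) := by
  obtain ⟨F, hF, hFE, hclose⟩ := hf' E hE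
  exact ⟨_, hp hF, Set.preimage_mono hFE, ChainLiftsClose.preimage hpq hclose⟩

end Chains

namespace InvLim

variable {ι : Type*} [Preorder ι] {Xs : ι → Type*} [∀ i, UniformSpace (Xs i)]
  (S : InvSys ι Xs)

def proj (i : ι) (x : InvLim S) : Xs i := x.1 i

lemma uniformContinuous_proj (i : ι) : UniformContinuous (proj S i) :=
  (Pi.uniformContinuous_proj Xs i).comp uniformContinuous_subtype_val

lemma uniformity_eq :
    uniformity (InvLim S) =
      ⨅ i, comap (Prod.map (proj S i) (proj S i)) (uniformity (Xs i)) := by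
  rw [uniformity_subtype, Pi.uniformity, comap_iInf]
  simp only [comap_comap]
  rfl

lemma comap_proj_uniformity_antitone {i j : ι} (h : i ≤ j) :
    comap (Prod.map (proj S j) (proj S j)) (uniformity (Xs j)) ≤
      comap (Prod.map (proj S i) (proj S i)) (uniformity (Xs i)) := by
  have hproj : Prod.map (proj S i) (proj S i) =
      Prod.map (S.bond i j h) (S.bond i j h) ∘ Prod.map (proj S j) (proj S j) := by
    funext x
    simp only [Function.comp, Prod.map, proj, x.1.2 i j h, x.2.2 i j h]
  rw [hproj, ← comap_comap]
  exact comap_mono (uniformContinuous_iff_le_comap.1 (S.uc i j h))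

lemma hasBasis_uniformity [IsDirected ι (· ≤ ·)] [Nonempty ι] :
    (uniformity (InvLim S)).HasBasis (fun k : Σ i, Set (Xs i × Xs i) => k.2 ∈ uniformity (Xs k.1))
      fun k => Prod.map (proj S k.1) (proj S k.1) ⁻¹' k.2 := by
  rw [uniformity_eq]
  refine hasBasis_iInf_of_directed' _ _ (fun i => (uniformity (Xs i)).basis_sets.comap _) ?_
  intro i j
  obtain ⟨k, hik, hjk⟩ := directed_of (· ≤ ·) i j
  exact ⟨k, comap_proj_uniformity_antitone S hik, comap_proj_uniformity_antitone S hjk⟩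

end InvLim

theorem invLim_approxUniqueChainLifts_general
    {ι : Type*} [Preorder ι] [IsDirected ι (· ≤ ·)] [Nonempty ι]
    {Xs : ι → Type*} [∀ i, UniformSpace (Xs i)]
    {Ys : ι → Type*} [∀ i, UniformSpace (Ys i)]
    (S : InvSys ι Xs) (T : InvSys ι Ys)
    (fι : ∀ i, Xs i → Ys i)
    (hau : ∀ i, ApproxUniqueChainLifts (fι i))
    (f : InvLim S → InvLim T)
    (hf : ∀ (x : InvLim S) (i : ι), (f x).1 i = fι i (x.1 i)) :
    ApproxUniqueChainLifts f :=
  ApproxUniqueChainLifts.of_hasBasis (InvLim.hasBasis_uniformity S) fun ⟨i, _⟩ hE =>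
    (hau i).exists_chainLiftsClose_preimage (InvLim.uniformContinuous_proj S i)
      (q := InvLim.proj T i) (fun x => (hf x i).symm) hE

/-- Approximate uniqueness of chain lifts is preserved by inverse limits of
compatible maps between inverse systems of uniform spaces. -/
theorem invLim_approxUniqueChainLifts
    {ι : Type*} [Preorder ι] [IsDirected ι (· ≤ ·)] [Nonempty ι]
    {Xs : ι → Type*} [∀ i, UniformSpace (Xs i)]
    {Ys : ι → Type*} [∀ i, UniformSpace (Ys i)]
    (S : InvSys ι Xs) (T : InvSys ι Ys)
    (fι : ∀ i, Xs i → Ys i)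
    (hcompat : ∀ i j (h : i ≤ j) (x : Xs j),
      T.bond i j h (fι j x) = fι i (S.bond i j h x))
    (hau : ∀ i, ApproxUniqueChainLifts (fι i))
    (f : InvLim S → InvLim T)
    (hf : ∀ (x : InvLim S) (i : ι), (f x).1 i = fι i (x.1 i)) :
    ApproxUniqueChainLifts f :=
  invLim_approxUniqueChainLifts_general S T fι hau f hf
end

section
/- Suppose {X_α, φ_{βα}} is a strong Mittag-Leffler inverse system of uniform spaces and f_α : X_α → Y are compatible maps into a fixed uniform space Y (i.e., f_α ∘ φ_{βα} = f_β for β ≥ α), each of which generates the uniform structure on Y. Then the induced map f = lim f_α : lim X_α → Y generates the uniform structure on Y. -/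
open Filter Set

universe u v

/-
For directed index sets, every entourage of the inverse limit contains the preimage of an
entourage `D` of a single `X_α` under the projection. Strong Mittag-Leffler supplies `β ≥ α` with
`φ_{βα}(X_β)` contained in the set of thread coordinates at `α`, so every `φ_{βα}`-image of a point
of `X_β` lifts to a thread. Hence `(f × f)(E)` contains `(f_β × f_β)(φ_{βα}⁻¹ D)`, an entourage
of `Y` because `f_β` generates the uniform structure; surjectivity follows the same way.
-/

theorem Function.Surjective.comp_of_range_subset {V W Z Y : Type*} {u : V → Z} {p : W → Z}
    {q : Z → Y} (hqu : Function.Surjective (q ∘ u)) (h : range u ⊆ range p) :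
    Function.Surjective (q ∘ p) := by
  intro y
  obtain ⟨v, rfl⟩ := hqu y
  obtain ⟨w, hw⟩ := h ⟨v, rfl⟩
  exact ⟨w, congrArg q hw⟩

theorem image_prodMap_comp_preimage_subset {V W Z Y : Type*} {u : V → Z} {p : W → Z}
    (h : range u ⊆ range p) (q : Z → Y) (D : Set (Z × Z)) :
    Prod.map (q ∘ u) (q ∘ u) '' (Prod.map u u ⁻¹' D) ⊆
      Prod.map (q ∘ p) (q ∘ p) '' (Prod.map p p ⁻¹' D) := by
  rintro _ ⟨⟨a, b⟩, hab, rfl⟩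
  obtain ⟨x, hx⟩ := h ⟨a, rfl⟩
  obtain ⟨y, hy⟩ := h ⟨b, rfl⟩
  exact ⟨(x, y), by simpa [hx, hy] using hab, by simp [hx, hy]⟩

open scoped Uniformity

namespace InvSys

variable {ι : Type*} [Preorder ι] {Xs : ι → Type*} [∀ i, UniformSpace (Xs i)]
  (S : InvSys ι Xs)

def proj (i : ι) (x : InvLim S) : Xs i := x.1 i

theorem bond_comp_proj {i k : ι} (h : i ≤ k) : S.bond i k h ∘ S.proj k = S.proj i :=
  funext fun x => x.2 i k h

theorem uniformContinuous_proj (i : ι) : UniformContinuous (S.proj i) :=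
  (Pi.uniformContinuous_proj Xs i).comp uniformContinuous_subtype_val

theorem uniformity_invLim :
    𝓤 (InvLim S) = ⨅ i, comap (Prod.map (S.proj i) (S.proj i)) (𝓤 (Xs i)) := by
  rw [uniformity_subtype, Pi.uniformity, comap_iInf]
  simp only [comap_comap]
  rfl

theorem comap_proj_uniformity_anti {i k : ι} (h : i ≤ k) :
    comap (Prod.map (S.proj k) (S.proj k)) (𝓤 (Xs k)) ≤
      comap (Prod.map (S.proj i) (S.proj i)) (𝓤 (Xs i)) := by
  rw [← tendsto_iff_comap, ← S.bond_comp_proj h, ← Prod.map_comp_map]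
  exact Tendsto.comp (S.uc i k h) tendsto_comap

theorem exists_preimage_proj_subset [IsDirected ι (· ≤ ·)] [Nonempty ι]
    {E : Set (InvLim S × InvLim S)} (hE : E ∈ 𝓤 (InvLim S)) :
    ∃ i, ∃ D ∈ 𝓤 (Xs i), Prod.map (S.proj i) (S.proj i) ⁻¹' D ⊆ E := by
  have hdir : Directed (· ≥ ·) fun i => comap (Prod.map (S.proj i) (S.proj i)) (𝓤 (Xs i)) :=
    fun i j =>
      let ⟨k, hik, hjk⟩ := directed_of (· ≤ ·) i j
      ⟨k, S.comap_proj_uniformity_anti hik, S.comap_proj_uniformity_anti hjk⟩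
  rw [uniformity_invLim, mem_iInf_of_directed hdir] at hE
  obtain ⟨i, hi⟩ := hE
  exact ⟨i, mem_comap.mp hi⟩

end InvSys

/-- If each compatible map `f_α : X_α → Y` of a strong Mittag-Leffler inverse
system generates the uniform structure on `Y`, then the induced map from the
inverse limit generates the uniform structure on `Y`. -/
theorem invLim_generatesUS
    {ι : Type*} [Preorder ι] [IsDirected ι (· ≤ ·)] [Nonempty ι]
    {Xs : ι → Type*} [∀ i, UniformSpace (Xs i)]
    {Y : Type*} [UniformSpace Y]
    (S : InvSys ι Xs) (hml : StrongML S)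
    (fι : ∀ i, Xs i → Y)
    (hcompat : ∀ i j (h : i ≤ j) (x : Xs j), fι i (S.bond i j h x) = fι j x)
    (hgen : ∀ i, GeneratesUS (fι i))
    (f : InvLim S → Y)
    (hf : ∀ (i : ι) (x : InvLim S), f x = fι i (x.1 i)) :
    GeneratesUS f := by
  have hf_proj : ∀ i, f = fι i ∘ S.proj i := fun i => funext (hf i)
  have hf_bond : ∀ i j (h : i ≤ j), fι j = fι i ∘ S.bond i j h :=
    fun i j h => funext fun x => (hcompat i j h x).symm
  have hrange : ∀ i, ∃ j, ∃ h : i ≤ j, range (S.bond i j h) ⊆ range (S.proj i) :=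
    fun i => let ⟨j, h, hj⟩ := hml i; ⟨j, h, hj.le⟩
  obtain ⟨i₀⟩ := ‹Nonempty ι›
  refine ⟨?_, ?_, fun E hE => ?_⟩
  · rw [hf_proj i₀]
    exact (hgen i₀).1.comp (S.uniformContinuous_proj i₀)
  · obtain ⟨j, hij, hr⟩ := hrange i₀
    rw [hf_proj i₀]
    exact (hf_bond i₀ j hij ▸ (hgen j).2.1).comp_of_range_subset hr
  · obtain ⟨i, D, hD, hDE⟩ := S.exists_preimage_proj_subset hE
    obtain ⟨j, hij, hr⟩ := hrange i
    refine mem_of_superset ((hgen j).2.2 _ (S.uc i j hij hD)) ?_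
    rw [hf_proj i, hf_bond i j hij]
    exact (image_prodMap_comp_preimage_subset hr _ D).trans (image_mono hDE)
end

section
/- Suppose {G_α, ψ_{βα}} is an inverse system of groups, {X_α, φ_{βα}} is an inverse system of uniform spaces over the same directed index set, and there are compatible actions of G_α on X_α, each of which is neutral. Suppose the inverse system {G_α, ψ_{βα}} is strong Mittag-Leffler. Set G = lim G_α and X = lim X_α. Then the induced action of G on X is neutral. -/
/-!
Entourages of the limit pulled back from a single level `i` form a basis, since the index set
is directed. Given such an entourage `E_i`, choose a Mittag-Leffler level `j ≥ i` and apply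
neutrality of `G_j` to the pullback of `E_i` along `X_j → X_i`. The element `k ∈ G_j` it
produces need not lift to `lim G`, but its image in `G_i` does, and by compatibility that image
moves the `i`-th coordinates exactly as `k` moves the `j`-th ones after projection.
-/

open Filter Set

universe u v

section Actions

variable (G : Type*) (X : Type*)

/-- The action of `G` on the uniform space `X` is neutral. -/
def IsNeutralAction [SMul G X] [UniformSpace X] : Prop :=
  ∀ E ∈ uniformity X, ∃ F ∈ uniformity X,
    ∀ (x y : X) (g : G), (x, g • y) ∈ F → ∃ h : G, (h • x, y) ∈ E

/-- `G_E`: the subgroup of `G` generated by the elements that move some point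
of `X` within the entourage `E`. -/
def subgroupEnt [Group G] [MulAction G X] (E : Set (X × X)) : Subgroup G :=
  Subgroup.closure { g : G | ∃ x : X, (x, g • x) ∈ E }

/-- The action has small scale bounded orbits. -/
def SmallScaleBoundedOrbits [Group G] [MulAction G X] [UniformSpace X] : Prop :=
  ∀ E ∈ uniformity X, ∃ F ∈ uniformity X,
    ∀ g ∈ subgroupEnt G X F, ∀ x : X, (x, g • x) ∈ E

/-- The action is uniformly properly discontinuous. -/
def UnifProperlyDisc [Group G] [SMul G X] [UniformSpace X] : Prop :=
  ∃ E₀ ∈ uniformity X, ∀ (g : G) (x : X), (x, g • x) ∈ E₀ → g = 1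

/-- The action is faithful. -/
def FaithfulAction [Group G] [SMul G X] : Prop :=
  ∀ g : G, (∀ x : X, g • x = x) → g = 1

/-- The action is uniformly equicontinuous. -/
def UnifEquicont [SMul G X] [UniformSpace X] : Prop :=
  ∀ E ∈ uniformity X, ∃ F ∈ uniformity X,
    ∀ (g : G) (x y : X), (x, y) ∈ F → (g • x, g • y) ∈ E

/-- The entourage `E` is `G`-invariant. -/
def InvariantEnt [SMul G X] (E : Set (X × X)) : Prop :=
  ∀ (g : G) (x y : X), (x, y) ∈ E → (g • x, g • y) ∈ E

end Actions

/-- An inverse system of groups over a preordered index set. -/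
structure GrpInvSys (ι : Type*) [Preorder ι] (Gs : ι → Type*)
    [∀ i, Group (Gs i)] where
  bond : ∀ i j, i ≤ j → Gs j →* Gs i
  bond_self : ∀ i (g : Gs i), bond i i le_rfl g = g
  bond_comp : ∀ i j k (hij : i ≤ j) (hjk : j ≤ k) (g : Gs k),
    bond i j hij (bond j k hjk g) = bond i k (hij.trans hjk) g

/-- The inverse limit of an inverse system of groups,
as the subgroup of threads of the product group. -/
def GrpInvLim {ι : Type*} [Preorder ι] {Gs : ι → Type*} [∀ i, Group (Gs i)]
    (T : GrpInvSys ι Gs) : Subgroup (∀ i, Gs i) where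
  carrier := { g | ∀ i j (h : i ≤ j), T.bond i j h (g j) = g i }
  one_mem' := by intro i j h; simp
  mul_mem' := by
    intro a b ha hb i j h
    simp only [Pi.mul_apply, map_mul, ha i j h, hb i j h]
  inv_mem' := by
    intro a ha i j h
    simp only [Pi.inv_apply, map_inv, ha i j h]

/-- The strong Mittag-Leffler property of an inverse system of groups. -/
def GrpStrongML {ι : Type*} [Preorder ι] {Gs : ι → Type*} [∀ i, Group (Gs i)]
    (T : GrpInvSys ι Gs) : Prop :=
  ∀ i : ι, ∃ j : ι, ∃ h : i ≤ j,
    Set.range (T.bond i j h) =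
      Set.range (fun g : (GrpInvLim T) => (g : ∀ i, Gs i) i)

open scoped Uniformity

namespace InvSys

variable {ι : Type*} [Preorder ι] {Xs : ι → Type*} [∀ i, UniformSpace (Xs i)]
  (S : InvSys ι Xs)

theorem uniformity_invLim_eq_iInf :
    𝓤 (InvLim S) =
      ⨅ i, comap (fun p : InvLim S × InvLim S => (p.1.1 i, p.2.1 i)) (𝓤 (Xs i)) := by
  rw [uniformity_subtype, Pi.uniformity, comap_iInf]
  simp only [comap_comap]
  rfl

theorem antitone_comap_uniformity :
    Antitone fun i => comap (fun p : InvLim S × InvLim S => (p.1.1 i, p.2.1 i)) (𝓤 (Xs i)) := by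
  intro i j hij
  have hbond : 𝓤 (Xs j) ≤
      comap (fun q : Xs j × Xs j => (S.bond i j hij q.1, S.bond i j hij q.2)) (𝓤 (Xs i)) :=
    tendsto_iff_comap.mp (S.uc i j hij)
  refine (comap_mono hbond).trans_eq ?_
  rw [comap_comap]
  congr 1
  funext p
  simp only [Function.comp_apply, p.1.2 i j hij, p.2.2 i j hij]

theorem uniformity_invLim_hasBasis [IsDirected ι (· ≤ ·)] [Nonempty ι] :
    (𝓤 (InvLim S)).HasBasis (fun p : Σ i, Set (Xs i × Xs i) => p.2 ∈ 𝓤 (Xs p.1))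
      fun p => {q | (q.1.1 p.1, q.2.1 p.1) ∈ p.2} := by
  rw [uniformity_invLim_eq_iInf]
  exact hasBasis_iInf_of_directed' _ _ (fun i => (𝓤 (Xs i)).basis_sets.comap _)
    S.antitone_comap_uniformity.directed_ge

end InvSys

/-- The inverse limit of compatible neutral actions, along a strong
Mittag-Leffler inverse system of groups, is neutral. -/
theorem invLim_neutral
    {ι : Type*} [Preorder ι] [IsDirected ι (· ≤ ·)] [Nonempty ι]
    {Xs : ι → Type*} [∀ i, UniformSpace (Xs i)]
    {Gs : ι → Type*} [∀ i, Group (Gs i)]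
    [∀ i, MulAction (Gs i) (Xs i)]
    (S : InvSys ι Xs) (T : GrpInvSys ι Gs)
    (hcompat : ∀ i j (h : i ≤ j) (g : Gs j) (x : Xs j),
      S.bond i j h (g • x) = T.bond i j h g • S.bond i j h x)
    (hneutral : ∀ i, IsNeutralAction (Gs i) (Xs i))
    (hml : GrpStrongML T)
    [MulAction (GrpInvLim T) (InvLim S)]
    (hact : ∀ (g : GrpInvLim T) (x : InvLim S) (i : ι),
      (g • x).1 i = (g : ∀ i, Gs i) i • x.1 i) :
    IsNeutralAction (GrpInvLim T) (InvLim S) := by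
  intro E hE
  obtain ⟨⟨i, Ei⟩, hEi, hsub⟩ := S.uniformity_invLim_hasBasis.mem_iff.mp hE
  obtain ⟨j, hij, hrange⟩ := hml i
  obtain ⟨Fj, hFj, hFj_neutral⟩ := hneutral j _ (S.uc i j hij hEi)
  refine ⟨_, S.uniformity_invLim_hasBasis.mem_of_mem (i := ⟨j, Fj⟩) hFj, ?_⟩
  intro x y g hxy
  obtain ⟨k, hk⟩ := hFj_neutral (x.1 j) (y.1 j) ((g : ∀ i, Gs i) j) (by simpa [hact] using hxy)
  obtain ⟨h, hh : (h : ∀ i, Gs i) i = T.bond i j hij k⟩ :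
      T.bond i j hij k ∈ range fun g : GrpInvLim T => (g : ∀ i, Gs i) i :=
    hrange ▸ mem_range_self k
  refine ⟨h, hsub ?_⟩
  change ((h • x).1 i, y.1 i) ∈ Ei
  rw [hact, hh, ← x.2 i j hij, ← y.2 i j hij, ← hcompat]
  exact hk
end

section
/- Suppose {X_i, φ_{i+1}} is an inverse sequence of uniform spaces and {G_i, ψ_{i+1}} is a Mittag-Leffler inverse sequence of groups with compatible actions of G_i on X_i that are neutral and free, and suppose lim¹ G_i is trivial. Set X = lim X_i and G = lim G_i, so the induced action of G on X is neutral and X/G carries the uniform structure generated by the orbit map. Then the map X/G → lim (X_i/G_i) sending the orbit of (x_i) to the thread of orbits ([x_i]) is a well-defined uniform equivalence, where each X_i/G_i carries the uniform structure generated by its orbit map and lim (X_i/G_i) carries the inverse limit uniformity. -/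
open Filter Set

universe u v

section Seq

variable {A : ℕ → Sort*}

/-- Composite of the bonding maps of an inverse sequence. -/
def seqComp (φ : ∀ i, A (i + 1) → A i) (n : ℕ) : ∀ k, A (n + k) → A n
  | 0 => id
  | k + 1 => fun a => seqComp φ n k (φ (n + k) a)

/-- Composite bonding map `A m → A n` for `n ≤ m`. -/
def seqCompLE (φ : ∀ i, A (i + 1) → A i) {n m : ℕ} (h : n ≤ m) (a : A m) : A n :=
  seqComp φ n (m - n) (cast (congrArg A (Nat.add_sub_cancel' h).symm) a)

end Seq

/-- The inverse limit of an inverse sequence (it carries the inverse limit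
uniformity when the terms are uniform spaces). -/
abbrev seqLim {A : ℕ → Type*} (φ : ∀ i, A (i + 1) → A i) : Type _ :=
  { x : ∀ i, A i // ∀ i, φ i (x (i + 1)) = x i }

/-- The Mittag-Leffler condition for an inverse sequence:
the decreasing images in each term are eventually constant. -/
def SeqMittagLeffler {A : ℕ → Type*} (φ : ∀ i, A (i + 1) → A i) : Prop :=
  ∀ n : ℕ, ∃ m : ℕ, ∃ hnm : n ≤ m, ∀ k (hk : m ≤ k),
    Set.range (seqCompLE φ (hnm.trans hk)) = Set.range (seqCompLE φ hnm)

/-- `lim¹` of an inverse sequence of groups is trivial: the difference map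
`(h_i) ↦ (h_i · ψ_i(h_{i+1})⁻¹)` on the product is surjective. -/
def Lim1Trivial {Gs : ℕ → Type*} [∀ i, Group (Gs i)]
    (ψ : ∀ i, Gs (i + 1) →* Gs i) : Prop :=
  Function.Surjective (fun h : ∀ i, Gs i => fun i => h i * (ψ i (h (i + 1)))⁻¹)

/-- The inverse limit of an inverse sequence of groups,
as the subgroup of threads of the product group. -/
def seqLimG {Gs : ℕ → Type*} [∀ i, Group (Gs i)] (ψ : ∀ i, Gs (i + 1) →* Gs i) :
    Subgroup (∀ i, Gs i) where
  carrier := { g | ∀ i, ψ i (g (i + 1)) = g i }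
  one_mem' := by intro i; simp
  mul_mem' := by intro a b ha hb i; simp only [Pi.mul_apply, map_mul, ha i, hb i]
  inv_mem' := by intro a ha i; simp only [Pi.inv_apply, map_inv, ha i]

/-!
Injectivity: if `g_i • y_i = x_i` for all `i`, freeness makes each `g_i` unique, so
`ψ_i(g_{i+1}) = g_i` and `(g_i)` is an element of `G = lim G_i`.

Surjectivity: a thread of orbits has representatives `r_i` with `φ_i(r_{i+1}) = g_i • r_i`;
since `lim¹ G_i` vanishes, `g_i = ψ_i(k_{i+1}) k_i⁻¹` for some `(k_i)`, and `(k_i⁻¹ • r_i)` is a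
thread.

Uniform continuity of the inverse: an entourage of `lim X_i` is controlled at a single level `n`.
By Mittag-Leffler there is `m ≥ n` such that the image in `G_n` of any element of `G_m` is the
`n`-th coordinate of some element of `G`, so neutrality of `G_m` on `X_m` transfers to `G` on
`lim X_i` at level `n`.
-/

section SeqComp

variable {A : ℕ → Sort*} (φ : ∀ i, A (i + 1) → A i)

theorem seqComp_cast {n k k' : ℕ} (h : k' = k) (e : n + k = n + k') (a : A (n + k)) :
    seqComp φ n k' (cast (congrArg A e) a) = seqComp φ n k a := by
  subst h
  rfl

theorem seqCompLE_eq_seqComp {n k : ℕ} (h : n ≤ n + k) (a : A (n + k)) :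
    seqCompLE φ h a = seqComp φ n k a :=
  seqComp_cast φ (Nat.add_sub_cancel_left n k) (Nat.add_sub_cancel' h).symm a

theorem seqCompLE_self {n : ℕ} (h : n ≤ n) (a : A n) : seqCompLE φ h a = a :=
  seqCompLE_eq_seqComp φ (k := 0) h a

theorem seqCompLE_succ {n m : ℕ} (hn : n ≤ m) (h : n ≤ m + 1) (a : A (m + 1)) :
    seqCompLE φ h a = seqCompLE φ hn (φ m a) := by
  obtain ⟨k, rfl⟩ := Nat.exists_eq_add_of_le hn
  rw [seqCompLE_eq_seqComp φ (k := k + 1) h a, seqCompLE_eq_seqComp φ (k := k) hn]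
  rfl

theorem seqCompLE_of_succ_le {n m : ℕ} (h : n + 1 ≤ m) (h' : n ≤ m) (a : A m) :
    seqCompLE φ h' a = φ n (seqCompLE φ h a) := by
  induction m, h using Nat.le_induction with
  | base => rw [seqCompLE_succ φ le_rfl h' a, seqCompLE_self, seqCompLE_self]
  | succ m hm ih =>
    rw [seqCompLE_succ φ (Nat.le_of_succ_le hm) h' a, ih _ (φ m a), seqCompLE_succ φ hm]

end SeqComp

section SeqLim

variable {A : ℕ → Type*} {φ : ∀ i, A (i + 1) → A i}

theorem seqCompLE_val (x : seqLim φ) {n m : ℕ} (h : n ≤ m) :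
    seqCompLE φ h (x.1 m) = x.1 n := by
  induction m, h using Nat.le_induction with
  | base => exact seqCompLE_self φ _ _
  | succ m hm ih => rw [seqCompLE_succ φ hm, x.2 m, ih]

theorem uniformContinuous_seqCompLE [∀ i, UniformSpace (A i)]
    (hφ : ∀ i, UniformContinuous (φ i)) {n m : ℕ} (h : n ≤ m) :
    UniformContinuous (seqCompLE φ h) := by
  induction m, h using Nat.le_induction with
  | base => rw [funext (seqCompLE_self φ le_rfl)]; exact uniformContinuous_id
  | succ m hm ih => rw [funext (seqCompLE_succ φ hm _)]; exact ih.comp (hφ m)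

theorem uniformContinuous_seqLim_val [∀ i, UniformSpace (A i)] (i : ℕ) :
    UniformContinuous fun x : seqLim φ => x.1 i :=
  (Pi.uniformContinuous_proj _ i).comp uniformContinuous_subtype_val

theorem exists_uniformity_level_of_mem_uniformity_seqLim [∀ i, UniformSpace (A i)]
    (hφ : ∀ i, UniformContinuous (φ i)) {E : Set (seqLim φ × seqLim φ)}
    (hE : E ∈ uniformity (seqLim φ)) :
    ∃ n, ∃ En ∈ uniformity (A n),
      ∀ x y : seqLim φ, (x.1 n, y.1 n) ∈ En → (x, y) ∈ E := by
  let level i := comap (fun p : seqLim φ × seqLim φ => (p.1.1 i, p.2.1 i)) (uniformity (A i))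
  have hU : uniformity (seqLim φ) = ⨅ i, level i := by
    rw [uniformity_subtype, Pi.uniformity, comap_iInf]
    exact iInf_congr fun i => comap_comap
  have hmono : ∀ {i j : ℕ}, i ≤ j → level j ≤ level i := by
    intro i j h
    have hc : (fun p : seqLim φ × seqLim φ => (p.1.1 i, p.2.1 i)) =
        (fun q : A j × A j => (seqCompLE φ h q.1, seqCompLE φ h q.2)) ∘
          (fun p : seqLim φ × seqLim φ => (p.1.1 j, p.2.1 j)) := by
      funext p
      simp only [Function.comp_apply, seqCompLE_val]
    simp only [level]
    rw [hc, ← comap_comap]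
    exact comap_mono (tendsto_iff_comap.mp (uniformContinuous_seqCompLE hφ h))
  have hdir : Directed (· ≥ ·) level :=
    fun i j => ⟨max i j, hmono (le_max_left i j), hmono (le_max_right i j)⟩
  rw [hU, mem_iInf_of_directed hdir] at hE
  obtain ⟨n, hn⟩ := hE
  obtain ⟨En, hEn, hsub⟩ := mem_comap.mp hn
  exact ⟨n, En, hEn, fun x y hxy => hsub hxy⟩

theorem exists_seqLim_of_forall_mem_image {S : ∀ i, Set (A i)}
    (hS : ∀ i, S i ⊆ φ i '' S (i + 1)) {n : ℕ} {a : A n} (ha : a ∈ S n) :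
    ∃ x : seqLim φ, x.1 n = a := by
  choose lift hlift_mem hlift_eq using hS
  let b : ∀ k, S (n + k) := fun k =>
    Nat.rec ⟨a, ha⟩ (fun k c => ⟨lift (n + k) c.2, hlift_mem _ c.2⟩) k
  have hb : ∀ k, φ (n + k) (b (k + 1)).1 = (b k).1 := fun k => hlift_eq (n + k) (b k).2
  have hb_base : ∀ k (h : n ≤ n + k), seqCompLE φ h (b k).1 = a := by
    intro k h
    induction k with
    | zero => exact seqCompLE_self φ h _
    | succ k ih => rw [seqCompLE_succ φ (Nat.le_add_right n k), hb k, ih]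
  -- `b i` lives at level `n + i`; the thread at level `i` is its image there
  refine ⟨⟨fun i => seqCompLE φ (Nat.le_add_left i n) (b i).1, fun i => ?_⟩, ?_⟩
  · rw [← seqCompLE_of_succ_le φ _ (by omega), seqCompLE_succ φ (Nat.le_add_left i n), hb i]
  · exact hb_base n (Nat.le_add_left n n)

theorem SeqMittagLeffler.exists_seqLim_apply_eq (hml : SeqMittagLeffler φ) (n : ℕ) :
    ∃ m, ∃ hnm : n ≤ m, ∀ a : A m, ∃ x : seqLim φ, x.1 n = seqCompLE φ hnm a := by
  choose m hle hstab using hml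
  -- the stable images form an inverse sequence with surjective bonds
  have hS : ∀ i, range (seqCompLE φ (hle i)) ⊆ φ i '' range (seqCompLE φ (hle (i + 1))) := by
    intro i a ha
    have hi := hstab i (max (m i) (m (i + 1))) (le_max_left _ _)
    have hi1 := hstab (i + 1) (max (m i) (m (i + 1))) (le_max_right _ _)
    rw [← hi] at ha
    obtain ⟨d, rfl⟩ := ha
    exact ⟨_, hi1 ▸ mem_range_self d, (seqCompLE_of_succ_le φ _ _ d).symm⟩
  exact ⟨m n, hle n, fun a => exists_seqLim_of_forall_mem_image hS (mem_range_self a)⟩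

end SeqLim

def IsQuotientUniformity {α : Type*} [UniformSpace α] (r : Setoid α)
    [UniformSpace (Quotient r)] : Prop :=
  (uniformity (Quotient r)).HasBasis (fun E => E ∈ uniformity α)
    (fun E => Prod.map (Quotient.mk r) (Quotient.mk r) '' E)

theorem IsQuotientUniformity.uniformContinuous_of_comm {α β : Type*} [UniformSpace α]
    [UniformSpace β] {r : Setoid α} {s : Setoid β} [UniformSpace (Quotient r)]
    [UniformSpace (Quotient s)] (hr : IsQuotientUniformity r) (hs : IsQuotientUniformity s)
    {f : α → β} (hf : UniformContinuous f) {g : Quotient r → Quotient s}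
    (hfg : ∀ a, g (Quotient.mk r a) = Quotient.mk s (f a)) : UniformContinuous g := by
  refine (hr.tendsto_iff hs).mpr fun E hE => ⟨_, hf hE, ?_⟩
  rintro _ ⟨⟨a, b⟩, hab, rfl⟩
  exact ⟨(f a, f b), hab, by simp only [Prod.map, hfg]⟩

theorem eq_of_smul_eq_smul_of_free {G X : Type*} [Group G] [MulAction G X]
    (hfree : ∀ (g : G) (x : X), g • x = x → g = 1) {g h : G} {x : X}
    (hgh : g • x = h • x) : g = h :=
  inv_mul_eq_one.mp (hfree _ x (by rw [mul_smul, ← hgh, inv_smul_smul]))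

theorem Lim1Trivial.exists_map_mul_inv_eq {Gs : ℕ → Type*} [∀ i, Group (Gs i)]
    {ψ : ∀ i, Gs (i + 1) →* Gs i} (hlim1 : Lim1Trivial ψ) (g : ∀ i, Gs i) :
    ∃ k : ∀ i, Gs i, ∀ i, ψ i (k (i + 1)) * (k i)⁻¹ = g i := by
  obtain ⟨k, hk⟩ := hlim1 fun i => (g i)⁻¹
  refine ⟨k, fun i => ?_⟩
  simpa only [mul_inv_rev, inv_inv] using congrArg (·⁻¹) (congrFun hk i)

section Actions

variable {Xs : ℕ → Type*} {Gs : ℕ → Type*} [∀ i, Group (Gs i)]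
  [∀ i, MulAction (Gs i) (Xs i)]
  {φ : ∀ i, Xs (i + 1) → Xs i} {ψ : ∀ i, Gs (i + 1) →* Gs i}

theorem seqCompLE_smul
    (hcompat : ∀ i (g : Gs (i + 1)) (x : Xs (i + 1)), φ i (g • x) = ψ i g • φ i x)
    {n m : ℕ} (h : n ≤ m) (g : Gs m) (x : Xs m) :
    seqCompLE φ h (g • x) = seqCompLE (fun i => ⇑(ψ i)) h g • seqCompLE φ h x := by
  induction m, h using Nat.le_induction with
  | base => rw [seqCompLE_self, seqCompLE_self, seqCompLE_self]
  | succ m hm ih =>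
    rw [seqCompLE_succ φ hm, seqCompLE_succ φ hm, seqCompLE_succ (fun i => ⇑(ψ i)) hm,
      hcompat m g x, ih]

theorem exists_seqLim_orbitRel
    (hcompat : ∀ i (g : Gs (i + 1)) (x : Xs (i + 1)), φ i (g • x) = ψ i g • φ i x)
    (hlim1 : Lim1Trivial ψ) (r : ∀ i, Xs i)
    (hr : ∀ i, MulAction.orbitRel (Gs i) (Xs i) (φ i (r (i + 1))) (r i)) :
    ∃ x : seqLim φ, ∀ i, MulAction.orbitRel (Gs i) (Xs i) (x.1 i) (r i) := by
  choose g hg using fun i => MulAction.mem_orbit_iff.mp (MulAction.orbitRel_apply.mp (hr i))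
  obtain ⟨k, hk⟩ := hlim1.exists_map_mul_inv_eq g
  refine ⟨⟨fun i => (k i)⁻¹ • r i, fun i => ?_⟩, fun i => MulAction.mem_orbit _ _⟩
  calc φ i ((k (i + 1))⁻¹ • r (i + 1))
      = (ψ i (k (i + 1)))⁻¹ • g i • r i := by rw [hcompat, map_inv, hg]
    _ = (k i)⁻¹ • r i := by rw [← hk i, smul_smul, inv_mul_cancel_left]

variable [MulAction (seqLimG ψ) (seqLim φ)]

theorem orbitRel_seqLim_iff
    (hcompat : ∀ i (g : Gs (i + 1)) (x : Xs (i + 1)), φ i (g • x) = ψ i g • φ i x)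
    (hfree : ∀ i (g : Gs i) (x : Xs i), g • x = x → g = 1)
    (hact : ∀ (g : seqLimG ψ) (x : seqLim φ) (i : ℕ),
      (g • x).1 i = (g : ∀ i, Gs i) i • x.1 i)
    {x y : seqLim φ} :
    MulAction.orbitRel ↥(seqLimG ψ) (seqLim φ) x y ↔
      ∀ i, MulAction.orbitRel (Gs i) (Xs i) (x.1 i) (y.1 i) := by
  simp only [MulAction.orbitRel_apply, MulAction.mem_orbit_iff]
  constructor
  · rintro ⟨g, rfl⟩ i
    exact ⟨(g : ∀ i, Gs i) i, (hact g y i).symm⟩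
  · intro hxy
    choose g hg using hxy
    have hthread : ∀ i, ψ i (g (i + 1)) = g i := fun i =>
      eq_of_smul_eq_smul_of_free (hfree i) (x := y.1 i) <| by
        rw [hg i, ← x.2 i, ← hg (i + 1), hcompat, y.2 i]
    exact ⟨⟨g, hthread⟩, Subtype.ext <| funext fun i => (hact _ y i).trans (hg i)⟩

theorem exists_uniformity_level_smul_mem [∀ i, UniformSpace (Xs i)]
    (hφ : ∀ i, UniformContinuous (φ i))
    (hcompat : ∀ i (g : Gs (i + 1)) (x : Xs (i + 1)), φ i (g • x) = ψ i g • φ i x)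
    (hml : SeqMittagLeffler (fun i => ⇑(ψ i)))
    (hneutral : ∀ i, IsNeutralAction (Gs i) (Xs i))
    (hact : ∀ (g : seqLimG ψ) (x : seqLim φ) (i : ℕ),
      (g • x).1 i = (g : ∀ i, Gs i) i • x.1 i)
    {E : Set (seqLim φ × seqLim φ)} (hE : E ∈ uniformity (seqLim φ)) :
    ∃ m, ∃ F ∈ uniformity (Xs m), ∀ (x y : seqLim φ) (a b : Gs m),
      (a • x.1 m, b • y.1 m) ∈ F → ∃ g : seqLimG ψ, (g • x, y) ∈ E := by
  obtain ⟨n, En, hEn, hEnE⟩ := exists_uniformity_level_of_mem_uniformity_seqLim hφ hE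
  obtain ⟨m, hnm, hlift⟩ := hml.exists_seqLim_apply_eq n
  obtain ⟨F, hF, hFE⟩ := hneutral m _ (uniformContinuous_seqCompLE hφ hnm hEn)
  refine ⟨m, F, hF, fun x y a b hab => ?_⟩
  obtain ⟨h, hh⟩ := hFE _ _ b hab
  obtain ⟨g, hg⟩ := hlift (h * a)
  refine ⟨⟨g.1, g.2⟩, hEnE _ _ ?_⟩
  rw [hact, hg, ← seqCompLE_val x hnm, ← seqCompLE_val y hnm, ← seqCompLE_smul hcompat,
    mul_smul]
  exact hh

variable {φq : ∀ i, Quotient (MulAction.orbitRel (Gs (i + 1)) (Xs (i + 1))) →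
  Quotient (MulAction.orbitRel (Gs i) (Xs i))}

local notation "X/G" => Quotient (MulAction.orbitRel (seqLimG ψ) (seqLim φ))
local notation "lim(Xᵢ/Gᵢ)" =>
  seqLim (A := fun i => Quotient (MulAction.orbitRel (Gs i) (Xs i))) φq

theorem exists_bijective_orbitThread
    (hcompat : ∀ i (g : Gs (i + 1)) (x : Xs (i + 1)), φ i (g • x) = ψ i g • φ i x)
    (hlim1 : Lim1Trivial ψ) (hfree : ∀ i (g : Gs i) (x : Xs i), g • x = x → g = 1)
    (hact : ∀ (g : seqLimG ψ) (x : seqLim φ) (i : ℕ),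
      (g • x).1 i = (g : ∀ i, Gs i) i • x.1 i)
    (hφq : ∀ i (x : Xs (i + 1)), φq i (Quotient.mk _ x) = Quotient.mk _ (φ i x)) :
    ∃ f : X/G → lim(Xᵢ/Gᵢ),
      Function.Bijective f ∧
        ∀ (x : seqLim φ) (i : ℕ), (f (Quotient.mk _ x)).1 i = Quotient.mk _ (x.1 i) := by
  let f : X/G → lim(Xᵢ/Gᵢ) :=
    Quotient.lift (fun x => ⟨fun i => Quotient.mk _ (x.1 i), fun i => by rw [hφq, x.2 i]⟩)
      fun x y hxy => Subtype.ext <| funext fun i =>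
        Quotient.sound ((orbitRel_seqLim_iff hcompat hfree hact).mp hxy i)
  have hf_inj : Function.Injective f := Quotient.ind₂ fun x y hxy =>
    Quotient.sound <| (orbitRel_seqLim_iff hcompat hfree hact).mpr fun i =>
      Quotient.eq.mp (congrArg (·.1 i) hxy)
  have hf_surj : Function.Surjective f := by
    intro q
    obtain ⟨x, hx⟩ := exists_seqLim_orbitRel hcompat hlim1 (fun i => (q.1 i).out) fun i =>
      Quotient.eq.mp (by rw [← hφq, Quotient.out_eq, q.2 i, Quotient.out_eq])
    exact ⟨Quotient.mk _ x, Subtype.ext <| funext fun i =>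
      (Quotient.sound (hx i)).trans (Quotient.out_eq _)⟩
  exact ⟨f, ⟨hf_inj, hf_surj⟩, fun x i => rfl⟩

variable [∀ i, UniformSpace (Xs i)]
  [∀ i, UniformSpace (Quotient (MulAction.orbitRel (Gs i) (Xs i)))]
  [UniformSpace (Quotient (MulAction.orbitRel ↥(seqLimG ψ) (seqLim φ)))]

theorem uniformContinuous_orbitThread
    (huQ : ∀ i, IsQuotientUniformity (MulAction.orbitRel (Gs i) (Xs i)))
    (huQG : IsQuotientUniformity (MulAction.orbitRel (seqLimG ψ) (seqLim φ)))
    {f : X/G → lim(Xᵢ/Gᵢ)}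
    (hf : ∀ (x : seqLim φ) (i : ℕ), (f (Quotient.mk _ x)).1 i = Quotient.mk _ (x.1 i)) :
    UniformContinuous f :=
  (uniformContinuous_pi.mpr fun i =>
    huQG.uniformContinuous_of_comm (huQ i) (uniformContinuous_seqLim_val i)
      fun x => hf x i).subtype_mk fun p => (f p).2

theorem uniformContinuous_orbitThread_symm (hφ : ∀ i, UniformContinuous (φ i))
    (hcompat : ∀ i (g : Gs (i + 1)) (x : Xs (i + 1)), φ i (g • x) = ψ i g • φ i x)
    (hml : SeqMittagLeffler (fun i => ⇑(ψ i)))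
    (hneutral : ∀ i, IsNeutralAction (Gs i) (Xs i))
    (hact : ∀ (g : seqLimG ψ) (x : seqLim φ) (i : ℕ),
      (g • x).1 i = (g : ∀ i, Gs i) i • x.1 i)
    (huQ : ∀ i, IsQuotientUniformity (MulAction.orbitRel (Gs i) (Xs i)))
    (huQG : IsQuotientUniformity (MulAction.orbitRel (seqLimG ψ) (seqLim φ)))
    (e : X/G ≃ lim(Xᵢ/Gᵢ))
    (he : ∀ (x : seqLim φ) (i : ℕ), (e (Quotient.mk _ x)).1 i = Quotient.mk _ (x.1 i)) :
    UniformContinuous e.symm := by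
  refine huQG.tendsto_right_iff.mpr fun E hE => ?_
  obtain ⟨m, F, hF, hFE⟩ := exists_uniformity_level_smul_mem hφ hcompat hml hneutral hact hE
  filter_upwards [uniformContinuous_seqLim_val m ((huQ m).mem_of_mem hF)]
  rintro ⟨p, q⟩ ⟨⟨u, v⟩, huv, hpq⟩
  obtain ⟨x, rfl⟩ : ∃ x, e (Quotient.mk _ x) = p :=
    ⟨(e.symm p).out, by rw [Quotient.out_eq, e.apply_symm_apply]⟩
  obtain ⟨y, rfl⟩ : ∃ y, e (Quotient.mk _ y) = q :=
    ⟨(e.symm q).out, by rw [Quotient.out_eq, e.apply_symm_apply]⟩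
  simp only [Prod.map, he, Prod.mk.injEq] at hpq
  obtain ⟨a, rfl⟩ := MulAction.mem_orbit_iff.mp (Quotient.eq.mp hpq.1)
  obtain ⟨b, rfl⟩ := MulAction.mem_orbit_iff.mp (Quotient.eq.mp hpq.2)
  obtain ⟨g, hg⟩ := hFE x y a b huv
  refine ⟨(g • x, y), hg, ?_⟩
  rw [Prod.map_apply, e.symm_apply_apply, e.symm_apply_apply,
    Quotient.sound (MulAction.mem_orbit x g)]

end Actions

/-- Given compatible neutral free actions of a Mittag-Leffler inverse sequence
of groups (with trivial `lim¹`) on an inverse sequence of uniform spaces, the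
orbit space `X/G` of the induced action on the inverse limits (with the uniform
structure generated by the orbit map) is uniformly equivalent to the inverse
limit of the orbit spaces `X_i/G_i`, via the map sending the orbit of a thread
to the thread of its orbits. -/
theorem invSeq_orbitSpace_uniformEquiv
    {Xs : ℕ → Type u} [∀ i, UniformSpace (Xs i)]
    {Gs : ℕ → Type v} [∀ i, Group (Gs i)] [∀ i, MulAction (Gs i) (Xs i)]
    (φ : ∀ i, Xs (i + 1) → Xs i) (hφuc : ∀ i, UniformContinuous (φ i))
    (ψ : ∀ i, Gs (i + 1) →* Gs i)
    (hcompat : ∀ i (g : Gs (i + 1)) (x : Xs (i + 1)),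
      φ i (g • x) = ψ i g • φ i x)
    (hml : SeqMittagLeffler (fun i => ⇑(ψ i)))
    (hlim1 : Lim1Trivial ψ)
    (hneutral : ∀ i, IsNeutralAction (Gs i) (Xs i))
    (hfree : ∀ i (g : Gs i) (x : Xs i), g • x = x → g = 1)
    [MulAction ↥(seqLimG ψ) (seqLim φ)]
    (hact : ∀ (g : ↥(seqLimG ψ)) (x : seqLim φ) (i : ℕ),
      (g • x).1 i = (g : ∀ i, Gs i) i • x.1 i)
    [∀ i, UniformSpace (Quotient (MulAction.orbitRel (Gs i) (Xs i)))]
    (huQ : ∀ i, (uniformity (Quotient (MulAction.orbitRel (Gs i) (Xs i)))).HasBasis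
      (fun E : Set (Xs i × Xs i) => E ∈ uniformity (Xs i))
      (fun E => Prod.map (Quotient.mk (MulAction.orbitRel (Gs i) (Xs i)))
        (Quotient.mk (MulAction.orbitRel (Gs i) (Xs i))) '' E))
    [UniformSpace (Quotient (MulAction.orbitRel ↥(seqLimG ψ) (seqLim φ)))]
    (huQG : (uniformity
        (Quotient (MulAction.orbitRel ↥(seqLimG ψ) (seqLim φ)))).HasBasis
      (fun E : Set (seqLim φ × seqLim φ) => E ∈ uniformity (seqLim φ))
      (fun E => Prod.map (Quotient.mk (MulAction.orbitRel ↥(seqLimG ψ) (seqLim φ)))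
        (Quotient.mk (MulAction.orbitRel ↥(seqLimG ψ) (seqLim φ))) '' E))
    (φq : ∀ i, Quotient (MulAction.orbitRel (Gs (i + 1)) (Xs (i + 1))) →
      Quotient (MulAction.orbitRel (Gs i) (Xs i)))
    (hφq : ∀ i (x : Xs (i + 1)),
      φq i (Quotient.mk (MulAction.orbitRel (Gs (i + 1)) (Xs (i + 1))) x) =
        Quotient.mk (MulAction.orbitRel (Gs i) (Xs i)) (φ i x)) :
    ∃ e : Quotient (MulAction.orbitRel ↥(seqLimG ψ) (seqLim φ)) ≃ᵤ seqLim φq,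
      ∀ (x : seqLim φ) (i : ℕ),
        (e (Quotient.mk (MulAction.orbitRel ↥(seqLimG ψ) (seqLim φ)) x)).1 i =
          Quotient.mk (MulAction.orbitRel (Gs i) (Xs i)) (x.1 i) := by
  obtain ⟨f, hf_bij, hf⟩ := exists_bijective_orbitThread hcompat hlim1 hfree hact hφq
  let e := Equiv.ofBijective f hf_bij
  exact ⟨⟨e, uniformContinuous_orbitThread huQ huQG hf,
    uniformContinuous_orbitThread_symm hφuc hcompat hml hneutral hact huQ huQG e hf⟩, hf⟩
end

section
/- Suppose a group G acts faithfully and uniformly equicontinuously on a uniform space X. Then for each entourage E of X there is a G-invariant entourage F ⊆ E such that G_F is a normal subgroup of G and the induced action of the quotient group G/G_F on the orbit space X/G_F (which carries the uniform structure generated by the orbit map X → X/G_F) is well defined, faithful, and uniformly properly discontinuous. -/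
open Filter Set

universe u v

/-!
Shrink `E` to its largest `G`-invariant part `F = {(x, y) | ∀ g, (g x, g y) ∈ E}`, an entourage
by uniform equicontinuity. Invariance of `F` makes the generators of `G_F` closed under
conjugation, so `G_F` is normal and `G ⧸ G_F` acts on `X ⧸ G_F`. If `(h₁ x, h₂ g x) ∈ F` with
`hᵢ ∈ G_F`, invariance gives `(x, h₁⁻¹ h₂ g x) ∈ F`, hence `g ∈ G_F`: the image of `F` in the
orbit space is an entourage witnessing proper discontinuity, and faithfulness follows by
evaluating at any point (if `X` is empty, faithfulness of the original action makes `G` trivial).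
-/

theorem Subgroup.closure_normal_of_conj_mem {G : Type*} [Group G] {s : Set G}
    (hs : ∀ a ∈ s, ∀ g : G, g * a * g⁻¹ ∈ s) : (closure s).Normal := by
  have hconj : Group.conjugatesOfSet s ⊆ s := fun x hx => by
    obtain ⟨a, ha, hax⟩ := Group.mem_conjugatesOfSet_iff.1 hx
    obtain ⟨c, rfl⟩ := isConj_iff.1 hax
    exact hs a ha c
  rw [le_antisymm closure_le_normalClosure (closure_mono hconj)]
  infer_instance

section InvariantEntourages

variable (G : Type*) {X : Type*} [Group G] [MulAction G X]

def invariantCore (E : Set (X × X)) : Set (X × X) :=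
  {p | ∀ g : G, (g • p.1, g • p.2) ∈ E}

theorem invariantCore_subset (E : Set (X × X)) : invariantCore G E ⊆ E := fun p hp => by
  simpa using hp 1

theorem invariantEnt_invariantCore (E : Set (X × X)) : InvariantEnt G X (invariantCore G E) :=
  fun g _ _ hxy g' => by simpa [mul_smul] using hxy (g' * g)

variable {G}

theorem UnifEquicont.invariantCore_mem [UniformSpace X] (hue : UnifEquicont G X)
    {E : Set (X × X)} (hE : E ∈ uniformity X) : invariantCore G E ∈ uniformity X := by
  obtain ⟨F, hF, hFE⟩ := hue E hE
  filter_upwards [hF] with p hp g using hFE g p.1 p.2 hp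

theorem InvariantEnt.subgroupEnt_normal {F : Set (X × X)} (hF : InvariantEnt G X F) :
    (subgroupEnt G X F).Normal :=
  Subgroup.closure_normal_of_conj_mem fun _ ⟨x, hx⟩ g =>
    ⟨g • x, by simpa [mul_smul] using hF g _ _ hx⟩

end InvariantEntourages

section QuotientAction

open MulAction

variable {G X : Type*} [Group G] [MulAction G X]

theorem orbitRel_smul_of_normal {H : Subgroup G} (hH : H.Normal) {g g' : G} {x y : X}
    (hg : g⁻¹ * g' ∈ H) (hxy : orbitRel H X x y) : orbitRel H X (g • x) (g' • y) := by
  obtain ⟨⟨h, hh⟩, rfl⟩ := orbitRel_apply.1 hxy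
  have hk : g'⁻¹ * g * h ∈ H := H.mul_mem (by simpa using H.inv_mem hg) hh
  refine orbitRel_apply.2 ⟨⟨g' * (g'⁻¹ * g * h) * g'⁻¹, hH.conj_mem _ hk g'⟩, ?_⟩
  simp [← mul_smul, mul_assoc]

def quotientSmul {H : Subgroup G} (hH : H.Normal) :
    G ⧸ H → Quotient (orbitRel H X) → Quotient (orbitRel H X) :=
  Quotient.map₂ (· • ·) fun _ _ hg _ _ hxy =>
    orbitRel_smul_of_normal hH (QuotientGroup.leftRel_apply.1 hg) hxy

theorem InvariantEnt.mem_subgroupEnt_of_mk_mem {F : Set (X × X)} (hF : InvariantEnt G X F)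
    {g : G} {x : X}
    (hgx : (Quotient.mk _ x, Quotient.mk _ (g • x)) ∈
      Prod.map (Quotient.mk (orbitRel (subgroupEnt G X F) X))
        (Quotient.mk (orbitRel (subgroupEnt G X F) X)) '' F) :
    g ∈ subgroupEnt G X F := by
  obtain ⟨⟨a, b⟩, hab, hmk⟩ := hgx
  obtain ⟨ha, hb⟩ := Prod.ext_iff.1 hmk
  obtain ⟨⟨h₁, hh₁⟩, rfl⟩ := orbitRel_apply.1 (Quotient.exact ha)
  obtain ⟨⟨h₂, hh₂⟩, rfl⟩ := orbitRel_apply.1 (Quotient.exact hb)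
  have hmoved : h₁⁻¹ * h₂ * g ∈ subgroupEnt G X F :=
    Subgroup.subset_closure ⟨x, by simpa [mul_smul] using hF h₁⁻¹ _ _ hab⟩
  have hg : g = h₂⁻¹ * h₁ * (h₁⁻¹ * h₂ * g) := by group
  rw [hg]
  exact Subgroup.mul_mem _ (Subgroup.mul_mem _ (Subgroup.inv_mem _ hh₂) hh₁) hmoved

theorem InvariantEnt.eq_one_of_quotientSmul_mem {F : Set (X × X)} (hF : InvariantEnt G X F)
    (q : G ⧸ subgroupEnt G X F) (z : Quotient (orbitRel (subgroupEnt G X F) X))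
    (hz : (z, quotientSmul hF.subgroupEnt_normal q z) ∈
      Prod.map (Quotient.mk (orbitRel (subgroupEnt G X F) X))
        (Quotient.mk (orbitRel (subgroupEnt G X F) X)) '' F) :
    q = QuotientGroup.mk 1 := by
  induction q using QuotientGroup.induction_on with | H g => ?_
  induction z using Quotient.inductionOn with | h x => ?_
  exact QuotientGroup.eq.2 (by simpa using (hF.mem_subgroupEnt_of_mk_mem hz))

end QuotientAction

/-- If a group `G` acts faithfully and uniformly equicontinuously on a uniform
space `X` (so that for every subgroup `H` the orbit map `X → X/H` generates a
uniform structure on `X/H`, which we posit), then for each entourage `E` of `X`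
there is a `G`-invariant entourage `F ⊆ E` such that `G_F` is normal in `G` and
the induced action of `G/G_F` on `X/G_F` is well defined, faithful, and
uniformly properly discontinuous. -/
theorem exists_invariant_entourage_properlyDisc_quotient
    {G : Type u} [Group G] {X : Type v} [UniformSpace X] [MulAction G X]
    (hfaith : FaithfulAction G X) (hue : UnifEquicont G X)
    [∀ H : Subgroup G, UniformSpace (Quotient (MulAction.orbitRel H X))]
    (huH : ∀ H : Subgroup G,
      (uniformity (Quotient (MulAction.orbitRel H X))).HasBasis
        (fun D : Set (X × X) => D ∈ uniformity X)
        (fun D => Prod.map (Quotient.mk (MulAction.orbitRel H X))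
          (Quotient.mk (MulAction.orbitRel H X)) '' D)) :
    ∀ E ∈ uniformity X, ∃ F ∈ uniformity X, F ⊆ E ∧ InvariantEnt G X F ∧
      (subgroupEnt G X F).Normal ∧
      ∃ act : (G ⧸ subgroupEnt G X F) →
          Quotient (MulAction.orbitRel ↥(subgroupEnt G X F) X) →
          Quotient (MulAction.orbitRel ↥(subgroupEnt G X F) X),
        (∀ (g : G) (x : X),
          act (QuotientGroup.mk g)
              (Quotient.mk (MulAction.orbitRel ↥(subgroupEnt G X F) X) x) =
            Quotient.mk (MulAction.orbitRel ↥(subgroupEnt G X F) X) (g • x)) ∧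
        (∀ q : G ⧸ subgroupEnt G X F,
          (∀ z, act q z = z) → q = QuotientGroup.mk 1) ∧
        (∃ E₀ ∈ uniformity (Quotient (MulAction.orbitRel ↥(subgroupEnt G X F) X)),
          ∀ (q : G ⧸ subgroupEnt G X F) z, (z, act q z) ∈ E₀ →
            q = QuotientGroup.mk 1) := by
  intro E hE
  have hF : InvariantEnt G X (invariantCore G E) := invariantEnt_invariantCore G E
  have hFmem : invariantCore G E ∈ uniformity X := hue.invariantCore_mem hE
  have hE₀ := (huH (subgroupEnt G X (invariantCore G E))).mem_of_mem hFmem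
  refine ⟨invariantCore G E, hFmem, invariantCore_subset G E, hF, hF.subgroupEnt_normal,
    quotientSmul hF.subgroupEnt_normal, fun _ _ => rfl, fun q hq => ?_,
    _, hE₀, hF.eq_one_of_quotientSmul_mem⟩
  rcases isEmpty_or_nonempty X with _ | ⟨⟨x⟩⟩
  · induction q using QuotientGroup.induction_on with | H g => ?_
    rw [hfaith g fun x => isEmptyElim x]
  · refine hF.eq_one_of_quotientSmul_mem q (Quotient.mk _ x) ?_
    rw [hq]
    exact refl_mem_uniformity hE₀
end
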